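/- arXiv:2010.01743 — 7 statements merged into one kernel-verified Lean document; each statement's English description precedes it below -/
import Mathlib

section
/- Let a_i mod d_i (i = 1,…,r) be an exact covering system with all moduli d_i nonzero and degree r ≥ 2. Then the associated ECSD has only finitely many components: there is a finite set T of integers such that every integer n is related under EqvGen R to some element of T. -/
/-!
Every modulus has absolute value at least 2: a modulus ±1 would make its congruence hold
everywhere, leaving no room for the others. Hence if `n = d i * m + a i` is the congruence that
`n` satisfies, then `|m| ≤ (|n| + |a i|) / 2 < |n|` as soon as `|n|` exceeds every `|a i|`.
Following edges backwards therefore reaches the finite window `[-A, A]`, `A = ∑ |a i|`.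
-/

lemma two_le_abs_of_existsUnique_dvd_sub {ι : Type*} [Nontrivial ι] {a d : ι → ℤ}
    (hexact : ∀ n : ℤ, ∃! i, d i ∣ n - a i) (i : ι) (hd : d i ≠ 0) : 2 ≤ |d i| := by
  by_contra! h
  have hunit : IsUnit (d i) := Int.isUnit_iff_abs_eq.mpr (by have := abs_pos.mpr hd; omega)
  obtain ⟨j, hji⟩ := exists_ne i
  exact hji ((hexact (a j)).unique (by simp) hunit.dvd)

lemma Int.abs_lt_of_eq_mul_add {d m n a : ℤ} (hd : 2 ≤ |d|) (ha : |a| < |n|)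
    (h : n = d * m + a) : |m| < |n| := by
  have : |d| * |m| ≤ |n| + |a| := by
    rw [← abs_mul, show d * m = n - a by omega]
    exact abs_sub _ _
  nlinarith [abs_nonneg m]

lemma Int.exists_mem_Icc_eqvGen_of_descent {R : ℤ → ℤ → Prop} (A : ℤ)
    (hdescent : ∀ n, A < |n| → ∃ m, |m| < |n| ∧ R m n) (n : ℤ) :
    ∃ t ∈ Finset.Icc (-A) A, Relation.EqvGen R n t := by
  induction hk : n.natAbs using Nat.strong_induction_on generalizing n with
  | _ k ih =>
    by_cases hn : |n| ≤ A
    · exact ⟨n, Finset.mem_Icc.mpr (abs_le.mp hn), .refl n⟩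
    · obtain ⟨m, hmn, hR⟩ := hdescent n (not_le.mp hn)
      obtain ⟨t, ht, hmt⟩ := ih m.natAbs (by rw [← hk]; zify; exact hmn) m rfl
      exact ⟨t, ht, (Relation.EqvGen.rel m n hR).symm.trans _ _ _ hmt⟩

/-- An ECSD of degree at least 2 has only finitely many components: there is a
finite set `T` of integers such that every integer is related under `EqvGen R`
to some element of `T`. -/
theorem ecsd_finitely_many_components (r : ℕ) (hr : 2 ≤ r) (a d : Fin r → ℤ)
    (hd : ∀ i, d i ≠ 0)
    (hexact : ∀ n : ℤ, ∃! i : Fin r, d i ∣ n - a i)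
    (R : ℤ → ℤ → Prop) (hR : ∀ n m : ℤ, R n m ↔ ∃ i : Fin r, m = d i * n + a i) :
    ∃ T : Finset ℤ, ∀ n : ℤ, ∃ t ∈ T, Relation.EqvGen R n t := by
  have : Nontrivial (Fin r) := Fin.nontrivial_iff_two_le.mpr hr
  have hd2 i : 2 ≤ |d i| := two_le_abs_of_existsUnique_dvd_sub hexact i (hd i)
  have ha i : |a i| ≤ ∑ j, |a j| :=
    Finset.single_le_sum (f := fun j => |a j|) (fun j _ => abs_nonneg _) (Finset.mem_univ i)
  refine ⟨_, Int.exists_mem_Icc_eqvGen_of_descent (∑ j, |a j|) fun n hn => ?_⟩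
  obtain ⟨i, ⟨m, hm⟩, -⟩ := hexact n
  exact ⟨m, Int.abs_lt_of_eq_mul_add (hd2 i) ((ha i).trans_lt hn) (by omega),
    (hR m n).mpr ⟨i, by omega⟩⟩
end

section
/- Let a_i mod d_i (i = 1,…,r) be an exact covering system with all moduli d_i nonzero and degree r ≥ 2, with edge relation R and predecessor function P. Then every component of the associated ECSD contains a cycle: for every integer n there exists an integer m such that n and m are related under EqvGen R and P^[k](m) = m for some k ≥ 1. -/
/-!
Since the congruences are exact and there are at least two of them, no modulus is a unit, so
`|dᵢ| ≥ 2`. Hence `n = dᵢ P(n) + aᵢ` gives `2 |P(n)| ≤ |n| + Σ |aᵢ|`, so the backward orbit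
`n, P(n), P²(n), …` stays in a finite interval and must eventually cycle. Every vertex of that
orbit lies in the component of `n`, because `n` is an out-neighbour of `P(n)`.
-/

open Function Set

def IsExactCover {ι : Type*} (a d : ι → ℤ) : Prop :=
  ∀ n : ℤ, ∃! i : ι, d i ∣ n - a i

namespace IsExactCover

variable {ι : Type*} {a d : ι → ℤ}

theorem not_isUnit [Nontrivial ι] (hc : IsExactCover a d) (i : ι) : ¬IsUnit (d i) := by
  intro hu
  obtain ⟨j, hji⟩ := exists_ne i
  exact hji ((hc (a j)).unique (by simp) hu.dvd)

theorem two_le_abs [Nontrivial ι] (hc : IsExactCover a d) {i : ι} (hd : d i ≠ 0) :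
    2 ≤ |d i| := by
  have h0 : |d i| ≠ 0 := abs_ne_zero.mpr hd
  have h1 : |d i| ≠ 1 := fun h ↦ hc.not_isUnit i (Int.isUnit_iff_abs_eq.mpr h)
  have := abs_nonneg (d i)
  omega

end IsExactCover

theorem two_mul_abs_le_of_eq_mul_add {ι : Type*} [Fintype ι] {a d : ι → ℤ}
    (hd : ∀ i, 2 ≤ |d i|) {P : ℤ → ℤ} (hP : ∀ n, ∃ i, d i * P n + a i = n) (n : ℤ) :
    2 * |P n| ≤ |n| + ∑ i, |a i| := by
  obtain ⟨i, hi⟩ := hP n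
  have hPn : d i * P n = n - a i := eq_sub_of_add_eq hi
  have ha : |a i| ≤ ∑ i, |a i| :=
    Finset.single_le_sum (f := fun i ↦ |a i|) (fun i _ ↦ abs_nonneg _) (Finset.mem_univ i)
  calc 2 * |P n| ≤ |d i| * |P n| := mul_le_mul_of_nonneg_right (hd i) (abs_nonneg _)
    _ = |n - a i| := by rw [← abs_mul, hPn]
    _ ≤ |n| + |a i| := abs_sub n (a i)
    _ ≤ |n| + ∑ i, |a i| := by gcongr

theorem mapsTo_Icc_of_two_mul_abs_le {f : ℤ → ℤ} {A C : ℤ} (hf : ∀ x, 2 * |f x| ≤ |x| + A)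
    (hAC : A ≤ C) : MapsTo f (Icc (-C) C) (Icc (-C) C) := by
  intro x hx
  have hx' : |x| ≤ C := abs_le.mpr hx
  have := hf x
  exact abs_le.mp (by omega)

theorem Function.exists_iterate_mem_periodicPts_of_mapsTo {α : Type*} {f : α → α} {s : Set α}
    (hs : s.Finite) (hf : MapsTo f s s) {x : α} (hx : x ∈ s) :
    ∃ j, f^[j] x ∈ periodicPts f := by
  have : Finite s := hs.to_subtype
  obtain ⟨i, j, hij, hs_eq⟩ :=
    Finite.exists_ne_map_eq_of_infinite fun k : ℕ ↦ (⟨f^[k] x, hf.iterate k hx⟩ : s)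
  have heq : f^[i] x = f^[j] x := congrArg Subtype.val hs_eq
  clear hs_eq
  wlog hlt : i < j generalizing i j
  · exact this j i hij.symm heq.symm (hij.symm.lt_of_le (not_lt.mp hlt))
  refine ⟨i, mk_mem_periodicPts (Nat.sub_pos_of_lt hlt) ?_⟩
  rw [IsPeriodicPt, IsFixedPt, ← iterate_add_apply, Nat.sub_add_cancel hlt.le, heq]

theorem Relation.EqvGen.iterate_left {α : Type*} {R : α → α → Prop} {f : α → α}
    (hf : ∀ x, R (f x) x) (x : α) (k : ℕ) : EqvGen R (f^[k] x) x := by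
  induction k with
  | zero => exact .refl x
  | succ k ih =>
    rw [iterate_succ_apply']
    exact (EqvGen.rel _ _ (hf _)).trans _ _ _ ih

/-- Every component of an ECSD of degree at least 2 contains a cycle: every integer
`n` is related under `EqvGen R` to a cyclic vertex `m` (one with `P^[k] m = m` for
some `k ≥ 1`). -/
theorem ecsd_component_has_cycle (r : ℕ) (hr : 2 ≤ r) (a d : Fin r → ℤ)
    (hd : ∀ i, d i ≠ 0)
    (hexact : ∀ n : ℤ, ∃! i : Fin r, d i ∣ n - a i)
    (R : ℤ → ℤ → Prop) (hR : ∀ n m : ℤ, R n m ↔ ∃ i : Fin r, m = d i * n + a i)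
    (P : ℤ → ℤ) (hP : ∀ n : ℤ, ∃ i : Fin r, d i * P n + a i = n) :
    ∀ n : ℤ, ∃ m : ℤ, Relation.EqvGen R n m ∧ ∃ k : ℕ, 1 ≤ k ∧ P^[k] m = m := by
  intro n
  have : Nontrivial (Fin r) := Fin.nontrivial_iff_two_le.mpr hr
  have hcover : IsExactCover a d := hexact
  have hPbound := two_mul_abs_le_of_eq_mul_add (fun i ↦ hcover.two_le_abs (hd i)) hP
  have hmaps := mapsTo_Icc_of_two_mul_abs_le hPbound (le_add_of_nonneg_left (abs_nonneg n))
  obtain ⟨j, k, hk, hcycle⟩ := exists_iterate_mem_periodicPts_of_mapsTo (finite_Icc _ _) hmaps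
    (abs_le.mp (le_add_of_nonneg_right (Finset.sum_nonneg fun i _ ↦ abs_nonneg (a i))))
  have hRP : ∀ x, R (P x) x := fun x ↦ (hR _ _).mpr <| (hP x).imp fun _ h ↦ h.symm
  exact ⟨P^[j] n, (Relation.EqvGen.iterate_left hRP n j).symm, k, hk, hcycle⟩
end

section
/- Let a_i mod d_i (i = 1,…,r) be an exact covering system with all moduli d_i nonzero and degree r ≥ 2, with edge relation R and predecessor function P. Then each component contains at most one cycle: if m and m′ are both cyclic vertices (P^[k](m) = m and P^[k′](m′) = m′ for some k, k′ ≥ 1) and m, m′ are related under EqvGen R, then m′ lies on the same cycle as m, i.e. m′ = P^[j](m) for some j ∈ ℕ. -/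
/-! Every vertex `n` has indegree one, so an edge `x → y` forces `x = P y`. Hence two vertices
in the same component have a common `P`-ancestor: `P^[p] m = P^[q] m'`. If `m'` is cyclic with
period `k'`, walking further along its cycle from `P^[q] m'` returns to `m'`, so `m'` lies on
the forward `P`-orbit of `m`. -/

theorem eq_of_exactCovering {r : ℕ} {a d : Fin r → ℤ} (hd : ∀ i, d i ≠ 0)
    (hexact : ∀ n : ℤ, ∃! i : Fin r, d i ∣ n - a i) {n x x' : ℤ} {i j : Fin r}
    (hx : d i * x + a i = n) (hx' : d j * x' + a j = n) : x = x' := by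
  obtain ⟨u, -, hu⟩ := hexact n
  have hij : i = j := (hu i ⟨x, by linarith⟩).trans (hu j ⟨x', by linarith⟩).symm
  subst hij
  exact mul_left_cancel₀ (hd i) (by linarith)

theorem Relation.EqvGen.exists_iterate_eq_iterate {α : Type*} {R : α → α → Prop} {f : α → α}
    (hf : ∀ x y, R x y → x = f y) {x y : α} (h : Relation.EqvGen R x y) :
    ∃ p q : ℕ, f^[p] x = f^[q] y := by
  induction h with
  | rel x y hxy => exact ⟨0, 1, hf x y hxy⟩
  | refl x => exact ⟨0, 0, rfl⟩
  | symm x y _ ih =>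
    obtain ⟨p, q, hpq⟩ := ih
    exact ⟨q, p, hpq.symm⟩
  | trans x y z _ _ ihxy ihyz =>
    obtain ⟨p, q, hxy⟩ := ihxy
    obtain ⟨s, t, hyz⟩ := ihyz
    refine ⟨s + p, q + t, ?_⟩
    rw [Function.iterate_add_apply, hxy, ← Function.iterate_add_apply, add_comm s q,
      Function.iterate_add_apply, hyz, ← Function.iterate_add_apply]

theorem Function.IsPeriodicPt.exists_iterate_iterate_eq {α : Type*} {f : α → α} {n : ℕ} {x : α}
    (hx : Function.IsPeriodicPt f n x) (hn : 0 < n) (q : ℕ) :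
    ∃ j : ℕ, f^[j] (f^[q] x) = x := by
  refine ⟨n * q - q, ?_⟩
  rw [← Function.iterate_add_apply, Nat.sub_add_cancel (Nat.le_mul_of_pos_left q hn)]
  exact hx.mul_const q

theorem ecsd_at_most_one_cycle_general (r : ℕ) (a d : Fin r → ℤ)
    (hd : ∀ i, d i ≠ 0)
    (hexact : ∀ n : ℤ, ∃! i : Fin r, d i ∣ n - a i)
    (R : ℤ → ℤ → Prop) (hR : ∀ n m : ℤ, R n m ↔ ∃ i : Fin r, m = d i * n + a i)
    (P : ℤ → ℤ) (hP : ∀ n : ℤ, ∃ i : Fin r, d i * P n + a i = n)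
    (m m' : ℤ) (k' : ℕ) (hk' : 1 ≤ k')
    (hm' : P^[k'] m' = m')
    (hconn : Relation.EqvGen R m m') :
    ∃ j : ℕ, m' = P^[j] m := by
  have hpred : ∀ x y, R x y → x = P y := fun x y hxy => by
    obtain ⟨i, hi⟩ := (hR x y).mp hxy
    obtain ⟨j, hj⟩ := hP y
    exact eq_of_exactCovering hd hexact hi.symm hj
  obtain ⟨p, q, hpq⟩ := hconn.exists_iterate_eq_iterate hpred
  obtain ⟨j, hj⟩ := Function.IsPeriodicPt.exists_iterate_iterate_eq hm' hk' q
  refine ⟨j + p, ?_⟩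
  rw [Function.iterate_add_apply, hpq, hj]

/-- Each component of an ECSD of degree at least 2 contains at most one cycle:
any two cyclic vertices in the same component lie on the same cycle. -/
theorem ecsd_at_most_one_cycle (r : ℕ) (hr : 2 ≤ r) (a d : Fin r → ℤ)
    (hd : ∀ i, d i ≠ 0)
    (hexact : ∀ n : ℤ, ∃! i : Fin r, d i ∣ n - a i)
    (R : ℤ → ℤ → Prop) (hR : ∀ n m : ℤ, R n m ↔ ∃ i : Fin r, m = d i * n + a i)
    (P : ℤ → ℤ) (hP : ∀ n : ℤ, ∃ i : Fin r, d i * P n + a i = n)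
    (m m' : ℤ) (k k' : ℕ) (hk : 1 ≤ k) (hk' : 1 ≤ k')
    (hm : P^[k] m = m) (hm' : P^[k'] m' = m')
    (hconn : Relation.EqvGen R m m') :
    ∃ j : ℕ, m' = P^[j] m :=
  ecsd_at_most_one_cycle_general r a d hd hexact R hR P hP m m' k' hk' hm' hconn
end

section
/- Let d ≥ 2 be an integer, let D = d or D = −d, and let a_1, …, a_d be integers forming a complete residue system modulo d (for every integer n there is a unique i with d ∣ n − a_i). Let R be the relation on ℤ with R(n, m) iff m = D·n + a_i for some i, and let P : ℤ → ℤ satisfy: for every n there exists i with D·P(n) + a_i = n. Then the following are equivalent: (1) every integer n can be expressed as n = Σ_{j=0}^{k} b_j·D^j for some k ∈ ℕ and some coefficients b_j each belonging to {a_1, …, a_d}; (2) the digraph is connected (every integer is related to 0 under EqvGen R) and 0 is a cyclic vertex (P^[c](0) = 0 for some c ≥ 1). -/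
/-! By Horner's rule an expansion `Σ_{j ≤ k} b_j D^j` is an `R`-path
`0 → b_k → D b_k + b_{k-1} → ⋯ → n`, so every expandable integer is connected to `0`, and along it
the predecessor map walks back to `0`; in particular `0` is expandable iff it is cyclic.
Conversely the digit `a_i` of `D n + a_i` is determined modulo `d`, so the last step of an
expansion can be undone: once `0` is expandable, the expandable integers form a union of
components, hence all of `ℤ` when the digraph is connected. -/

open Finset Relation

section DigitExpansion

variable {ι : Type*}

theorem sum_digits_range_succ (a : ι → ℤ) (D : ℤ) (b : ℕ → ι) (k : ℕ) :
    ∑ j ∈ range (k + 1), a (b j) * D ^ j = D * ∑ j ∈ range k, a (b (j + 1)) * D ^ j + a (b 0) := by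
  rw [sum_range_succ', mul_sum, pow_zero, mul_one]
  congr 1
  exact sum_congr rfl fun j _ => by ring

def HasDigitExpansion (a : ι → ℤ) (D n : ℤ) : Prop :=
  ∃ k : ℕ, ∃ b : ℕ → ι, n = ∑ j ∈ range (k + 1), a (b j) * D ^ j

variable {a : ι → ℤ} {D : ℤ}

theorem HasDigitExpansion.mul_add {n : ℤ} (h : HasDigitExpansion a D n) (i : ι) :
    HasDigitExpansion a D (D * n + a i) := by
  obtain ⟨k, b, rfl⟩ := h
  refine ⟨k + 1, fun | 0 => i | j + 1 => b j, ?_⟩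
  rw [sum_digits_range_succ _ _ _ (k + 1)]

theorem mul_add_digit_injective (hinj : ∀ i j, D ∣ a i - a j → i = j) (hD : D ≠ 0)
    {x y : ℤ} {i j : ι} (h : D * x + a i = D * y + a j) : x = y ∧ i = j := by
  obtain rfl : i = j := hinj i j ⟨y - x, by linear_combination h⟩
  exact ⟨mul_left_cancel₀ hD (by linarith), rfl⟩

theorem HasDigitExpansion.of_mul_add (hinj : ∀ i j, D ∣ a i - a j → i = j) (hD : D ≠ 0)
    {n : ℤ} {i : ι} (h : HasDigitExpansion a D (D * n + a i)) :
    n = 0 ∨ HasDigitExpansion a D n := by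
  obtain ⟨k, b, hb⟩ := h
  rw [sum_digits_range_succ] at hb
  obtain ⟨rfl, -⟩ := mul_add_digit_injective hinj hD hb
  cases k with
  | zero => exact .inl (sum_range_zero _)
  | succ k => exact .inr ⟨k, fun j => b (j + 1), rfl⟩

theorem hasDigitExpansion_mul_add_iff (hinj : ∀ i j, D ∣ a i - a j → i = j) (hD : D ≠ 0)
    (h0 : HasDigitExpansion a D 0) {n : ℤ} {i : ι} :
    HasDigitExpansion a D (D * n + a i) ↔ HasDigitExpansion a D n := by
  refine ⟨fun h => ?_, fun h => h.mul_add i⟩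
  rcases h.of_mul_add hinj hD with rfl | h
  exacts [h0, h]

theorem eqvGen_sum_digits_zero {R : ℤ → ℤ → Prop} (hR : ∀ n i, R n (D * n + a i))
    (k : ℕ) (b : ℕ → ι) : EqvGen R (∑ j ∈ range k, a (b j) * D ^ j) 0 := by
  induction k generalizing b with
  | zero => exact .refl 0
  | succ k ih =>
    rw [sum_digits_range_succ]
    exact .trans _ _ _ (.symm _ _ (.rel _ _ (hR _ _))) (ih _)

end DigitExpansion

section Predecessor

variable {ι : Type*} {a : ι → ℤ} {D : ℤ} {P : ℤ → ℤ}

theorem predecessor_mul_add (hinj : ∀ i j, D ∣ a i - a j → i = j) (hD : D ≠ 0)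
    (hP : ∀ n, ∃ i, D * P n + a i = n) (x : ℤ) (i : ι) : P (D * x + a i) = x := by
  obtain ⟨j, hj⟩ := hP (D * x + a i)
  exact (mul_add_digit_injective hinj hD hj).1

theorem iterate_predecessor_sum_digits (hP : ∀ x i, P (D * x + a i) = x) (k : ℕ) (b : ℕ → ι) :
    P^[k] (∑ j ∈ range k, a (b j) * D ^ j) = 0 := by
  induction k generalizing b with
  | zero => exact sum_range_zero _
  | succ k ih => rw [sum_digits_range_succ, Function.iterate_succ_apply, hP, ih]

theorem exists_eq_sum_digits_add_iterate (hP : ∀ n, ∃ i, D * P n + a i = n) (c : ℕ) (n : ℤ) :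
    ∃ b : ℕ → ι, n = ∑ t ∈ range c, a (b t) * D ^ t + D ^ c * P^[c] n := by
  induction c generalizing n with
  | zero => exact ⟨fun _ => (hP n).choose, by simp⟩
  | succ c ih =>
    obtain ⟨i, hi⟩ := hP n
    obtain ⟨b, hb⟩ := ih (P n)
    refine ⟨fun | 0 => i | j + 1 => b j, ?_⟩
    rw [sum_digits_range_succ, Function.iterate_succ_apply, pow_succ']
    linear_combination -hi + D * hb

theorem hasDigitExpansion_zero_of_iterate_eq_zero (hP : ∀ n, ∃ i, D * P n + a i = n)
    {c : ℕ} (hc : 1 ≤ c) (hcyc : P^[c] 0 = 0) : HasDigitExpansion a D 0 := by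
  obtain ⟨k, rfl⟩ := Nat.exists_eq_add_of_le' hc
  obtain ⟨b, hb⟩ := exists_eq_sum_digits_add_iterate (ι := ι) hP (k + 1) 0
  exact ⟨k, b, by rwa [hcyc, mul_zero, add_zero] at hb⟩

end Predecessor

theorem digit_eq_of_dvd_sub {d : ℕ} {a : Fin d → ℤ} {D : ℤ}
    (hres : ∀ n : ℤ, ∃! i : Fin d, (d : ℤ) ∣ n - a i) (hdD : (d : ℤ) ∣ D)
    (i j : Fin d) (h : D ∣ a i - a j) : i = j :=
  (hres (a i)).unique (by simp) (hdD.trans h)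

theorem ecsd_representation_iff_connected_and_zero_cyclic_general
    (d : ℕ) (D : ℤ) (hD : D = (d : ℤ) ∨ D = -(d : ℤ))
    (a : Fin d → ℤ)
    (hres : ∀ n : ℤ, ∃! i : Fin d, (d : ℤ) ∣ n - a i)
    (R : ℤ → ℤ → Prop) (hR : ∀ n m : ℤ, R n m ↔ ∃ i : Fin d, m = D * n + a i)
    (P : ℤ → ℤ) (hP : ∀ n : ℤ, ∃ i : Fin d, D * P n + a i = n) :
    (∀ n : ℤ, ∃ k : ℕ, ∃ b : ℕ → Fin d,
        n = ∑ j ∈ Finset.range (k + 1), a (b j) * D ^ j) ↔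
      ((∀ n : ℤ, Relation.EqvGen R n 0) ∧ ∃ c : ℕ, 1 ≤ c ∧ P^[c] 0 = 0) := by
  have hD0 : D ≠ 0 := by
    have := (hres 0).exists.choose.pos
    rcases hD with rfl | rfl <;> omega
  have hdD : (d : ℤ) ∣ D := by rcases hD with rfl | rfl <;> simp
  have hinj := digit_eq_of_dvd_sub hres hdD
  have hRstep : ∀ n i, R n (D * n + a i) := fun n i => (hR n _).2 ⟨i, rfl⟩
  constructor
  · intro hrep
    refine ⟨fun n => ?_, ?_⟩
    · obtain ⟨k, b, rfl⟩ := hrep n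
      exact eqvGen_sum_digits_zero hRstep (k + 1) b
    · obtain ⟨k, b, hb⟩ := hrep 0
      have := iterate_predecessor_sum_digits (predecessor_mul_add hinj hD0 hP) (k + 1) b
      exact ⟨k + 1, by omega, by rwa [← hb] at this⟩
  · rintro ⟨hconn, c, hc, hcyc⟩ n
    have h0 : HasDigitExpansion a D 0 := hasDigitExpansion_zero_of_iterate_eq_zero hP hc hcyc
    have hstep : ∀ x y, R x y → (HasDigitExpansion a D x ↔ HasDigitExpansion a D y) := by
      intro x y hxy
      obtain ⟨i, rfl⟩ := (hR x y).1 hxy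
      exact (hasDigitExpansion_mul_add_iff hinj hD0 h0).symm
    have hequiv : Equivalence fun x y => HasDigitExpansion a D x ↔ HasDigitExpansion a D y :=
      ⟨fun _ => Iff.rfl, Iff.symm, Iff.trans⟩
    exact (hequiv.eqvGen_iff.1 (EqvGen.mono hstep _ _ (hconn n))).2 h0

/-- For an ECSD `G(Dn + a_1, …, Dn + a_d)` with `D = ±d` and `a_1, …, a_d`
a complete residue system mod `d`: every integer has a representation
`Σ_{j=0}^{k} b_j D^j` with digits among the `a_i` if and only if the digraph is
connected and `0` is a cyclic vertex. -/
theorem ecsd_representation_iff_connected_and_zero_cyclic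
    (d : ℕ) (hd : 2 ≤ d) (D : ℤ) (hD : D = (d : ℤ) ∨ D = -(d : ℤ))
    (a : Fin d → ℤ)
    (hres : ∀ n : ℤ, ∃! i : Fin d, (d : ℤ) ∣ n - a i)
    (R : ℤ → ℤ → Prop) (hR : ∀ n m : ℤ, R n m ↔ ∃ i : Fin d, m = D * n + a i)
    (P : ℤ → ℤ) (hP : ∀ n : ℤ, ∃ i : Fin d, D * P n + a i = n) :
    (∀ n : ℤ, ∃ k : ℕ, ∃ b : ℕ → Fin d,
        n = ∑ j ∈ Finset.range (k + 1), a (b j) * D ^ j) ↔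
      ((∀ n : ℤ, Relation.EqvGen R n 0) ∧ ∃ c : ℕ, 1 ≤ c ∧ P^[c] 0 = 0) :=
  ecsd_representation_iff_connected_and_zero_cyclic_general d D hD a hres R hR P hP
end

section
/- Let d ≥ 3 be an integer and t an integer with −(d−1) < t < 0. Then 0 is the only cyclic vertex of the ECSD G(dn+t, dn+t+1, …, dn+t+d−1): if m is an integer, k ≥ 1, and b_0, …, b_{k−1} are integers with t ≤ b_j ≤ t + d − 1 satisfying m = d^k·m + Σ_{j=0}^{k−1} b_j·d^j, then m = 0. -/
/-!
Multiplying the cycle equation by `d - 1` and using `(d - 1) ∑ d ^ j = d ^ k - 1`, the digit bounds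
become `t ≤ (1 - d) m ≤ t + d - 1` after cancelling `d ^ k - 1 > 0`. So the multiple `(d - 1) m`
of `d - 1` has absolute value less than `d - 1`, hence vanishes.
-/

open Finset

theorem sub_one_mul_digitSum_mem_Icc {R : Type*} [CommRing R] [LinearOrder R]
    [IsStrictOrderedRing R] {d lo hi : R} {k : ℕ} {b : ℕ → R} (hd : 1 ≤ d)
    (hb : ∀ j < k, b j ∈ Set.Icc lo hi) :
    (d - 1) * ∑ j ∈ range k, b j * d ^ j ∈ Set.Icc (lo * (d ^ k - 1)) (hi * (d ^ k - 1)) := by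
  have hpow (j : ℕ) : 0 ≤ d ^ j := pow_nonneg (by linarith) j
  have hd₁ : 0 ≤ d - 1 := by linarith
  constructor
  · calc lo * (d ^ k - 1) = (d - 1) * ∑ j ∈ range k, lo * d ^ j := by
          rw [← mul_sum, ← geom_sum_mul]; ring
      _ ≤ _ := mul_le_mul_of_nonneg_left (sum_le_sum fun j hj ↦
          mul_le_mul_of_nonneg_right (hb j (mem_range.1 hj)).1 (hpow j)) hd₁
  · calc (d - 1) * ∑ j ∈ range k, b j * d ^ j ≤ (d - 1) * ∑ j ∈ range k, hi * d ^ j :=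
          mul_le_mul_of_nonneg_left (sum_le_sum fun j hj ↦
            mul_le_mul_of_nonneg_right (hb j (mem_range.1 hj)).2 (hpow j)) hd₁
      _ = hi * (d ^ k - 1) := by rw [← mul_sum, ← geom_sum_mul]; ring

theorem ecsd_nonstandard_dary_zero_only_cyclic_general
    (d t : ℤ) (ht₁ : -(d - 1) < t) (ht₂ : t < 0)
    (m : ℤ) (k : ℕ) (hk : 1 ≤ k) (b : ℕ → ℤ)
    (hb : ∀ j < k, t ≤ b j ∧ b j ≤ t + d - 1)
    (hcyc : m = d ^ k * m + ∑ j ∈ Finset.range k, b j * d ^ j) :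
    m = 0 := by
  have hN : 0 < d ^ k - 1 := sub_pos.2 (one_lt_pow₀ (show 1 < d by omega) (show k ≠ 0 by omega))
  have hS : (d - 1) * ∑ j ∈ range k, b j * d ^ j = -((d - 1) * m) * (d ^ k - 1) := by
    linear_combination (1 - d) * hcyc
  obtain ⟨hlo, hhi⟩ := sub_one_mul_digitSum_mem_Icc (show 1 ≤ d by omega) hb
  rw [hS] at hlo hhi
  have hlo' := le_of_mul_le_mul_right hlo hN
  have hhi' := le_of_mul_le_mul_right hhi hN
  have hzero : (d - 1) * m = 0 :=
    Int.eq_zero_of_abs_lt_dvd (dvd_mul_right _ _) (abs_lt.2 ⟨by linarith, by linarith⟩)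
  simpa [show d - 1 ≠ 0 by omega] using hzero

/-- For `d ≥ 3` and `-(d-1) < t < 0`, zero is the only cyclic vertex of the
ECSD `G(dn+t, dn+t+1, …, dn+t+d-1)`. -/
theorem ecsd_nonstandard_dary_zero_only_cyclic
    (d t : ℤ) (hd : 3 ≤ d) (ht₁ : -(d - 1) < t) (ht₂ : t < 0)
    (m : ℤ) (k : ℕ) (hk : 1 ≤ k) (b : ℕ → ℤ)
    (hb : ∀ j < k, t ≤ b j ∧ b j ≤ t + d - 1)
    (hcyc : m = d ^ k * m + ∑ j ∈ Finset.range k, b j * d ^ j) :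
    m = 0 :=
  ecsd_nonstandard_dary_zero_only_cyclic_general d t ht₁ ht₂ m k hk b hb hcyc
end

section
/- Let d ≥ 2 be a natural number. Then every integer can be written uniquely in base −d with digit set {0, 1, …, d−1}: for every n ∈ ℤ there exists a unique finitely supported function b : ℕ → ℤ with 0 ≤ b(i) ≤ d − 1 for all i and n = Σ_i b(i)·(−d)^i. -/
/-!
The digits of a base `-d` expansion of `n` are the coefficients of an integer polynomial `p`
with `p(-d) = n`. Uniqueness: if `p(x) = 0` and every coefficient of `p` is smaller than `|x|`
in absolute value, then `x` divides the constant term, which is therefore `0`; so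
`p = X * divX p` and `divX p` vanishes at `x` as well. Existence: the last digit of `n` is
`n % d`, and the remaining digits represent `-(n / d)`.
-/

open Polynomial

namespace Polynomial

section Semiring

variable {R : Type*} [Semiring R]

theorem eval_ofFinsupp_ofCoeff (b : ℕ →₀ R) (x : R) :
    (⟨.ofCoeff b⟩ : R[X]).eval x = b.sum fun i c => c * x ^ i := by
  rw [eval_eq_sum, sum_def]
  rfl

theorem eval_eq_eval_divX_mul_add (p : R[X]) (x : R) :
    p.eval x = (divX p).eval x * x + p.coeff 0 := by
  conv_lhs => rw [← divX_mul_X_add p]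
  rw [eval_add, eval_mul_X, eval_C]

end Semiring

theorem coeff_zero_eq_zero_of_eval_eq_zero {p : ℤ[X]} {x : ℤ}
    (hp : |p.coeff 0| < |x|) (hx : p.eval x = 0) : p.coeff 0 = 0 := by
  have hdvd : x ∣ p.coeff 0 := ⟨-(divX p).eval x, by linarith [eval_eq_eval_divX_mul_add p x]⟩
  exact Int.eq_zero_of_abs_lt_dvd ((abs_dvd _ _).mpr hdvd) hp

theorem eq_zero_of_eval_eq_zero_of_abs_coeff_lt {p : ℤ[X]} {x : ℤ}
    (hp : ∀ i, |p.coeff i| < |x|) (hx : p.eval x = 0) : p = 0 := by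
  ext k
  induction k generalizing p with
  | zero => exact coeff_zero_eq_zero_of_eval_eq_zero (hp 0) hx
  | succ k ih =>
    have hx0 : x ≠ 0 := abs_pos.mp ((abs_nonneg _).trans_lt (hp 0))
    have hdivX : (divX p).eval x = 0 := by
      have := eval_eq_eval_divX_mul_add p x
      rw [hx, coeff_zero_eq_zero_of_eval_eq_zero (hp 0) hx, add_zero] at this
      exact (mul_eq_zero.mp this.symm).resolve_right hx0
    rw [← coeff_divX]
    exact ih (fun i => by simpa only [coeff_divX] using hp (i + 1)) hdivX

end Polynomial

theorem negBase_digits_unique {d : ℤ} {p q : ℤ[X]}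
    (hp : ∀ i, 0 ≤ p.coeff i ∧ p.coeff i ≤ d - 1) (hq : ∀ i, 0 ≤ q.coeff i ∧ q.coeff i ≤ d - 1)
    (hpq : p.eval (-d) = q.eval (-d)) : p = q := by
  refine sub_eq_zero.mp (eq_zero_of_eval_eq_zero_of_abs_coeff_lt (x := -d) (fun i => ?_) ?_)
  · rw [coeff_sub, abs_lt, abs_neg]
    obtain ⟨hp0, hp1⟩ := hp i
    obtain ⟨hq0, hq1⟩ := hq i
    constructor <;> cases abs_cases d <;> linarith
  · rw [eval_sub, hpq, sub_self]

theorem natAbs_four_mul_neg_ediv_sub_one_lt {n d : ℤ} (hd : 2 ≤ d) (hn : n ≠ 0) :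
    (4 * -(n / d) - 1).natAbs < (4 * n - 1).natAbs := by
  have hdiv := Int.mul_ediv_add_emod n d
  have hmod_nonneg := Int.emod_nonneg n (by omega : d ≠ 0)
  have hmod_lt := Int.emod_lt_of_pos n (by omega : 0 < d)
  rcases hn.lt_or_gt with hneg | hpos
  · have : n ≤ n / d := by nlinarith
    have : n / d < 0 := by nlinarith
    omega
  · have : 0 ≤ n / d := by nlinarith
    have : 2 * (n / d) ≤ n := by nlinarith
    omega

theorem exists_negBase_digits {d : ℤ} (hd : 2 ≤ d) (n : ℤ) :
    ∃ p : ℤ[X], (∀ i, 0 ≤ p.coeff i ∧ p.coeff i ≤ d - 1) ∧ p.eval (-d) = n := by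
  by_cases hn : n = 0
  · exact ⟨0, fun i => by simp only [coeff_zero]; omega, by simp [hn]⟩
  obtain ⟨p, hp, hpn⟩ := exists_negBase_digits hd (-(n / d))
  refine ⟨p * X + C (n % d), fun i => ?_, ?_⟩
  · cases i with
    | zero =>
      rw [coeff_add, coeff_mul_X_zero, coeff_C_zero, zero_add]
      exact ⟨Int.emod_nonneg n (by omega), by linarith [Int.emod_lt_of_pos n (by omega : 0 < d)]⟩
    | succ i =>
      rw [coeff_add, coeff_mul_X, coeff_C_succ, add_zero]
      exact hp i
  · rw [eval_add, eval_mul_X, eval_C, hpn]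
    linarith [Int.mul_ediv_add_emod n d]
-- `-(n / d)` need not be smaller than `n` in absolute value (`-1 ↦ 1` for `d = 2`),
-- but it is always closer to `1 / 4`.
termination_by (4 * n - 1).natAbs
decreasing_by exact natAbs_four_mul_neg_ediv_sub_one_lt hd hn

/-- For a natural number `d ≥ 2`, every integer has a unique base-`(-d)`
representation with digit set `{0, 1, …, d-1}`: a unique finitely supported
`b : ℕ → ℤ` with `0 ≤ b i ≤ d - 1` for all `i` and `n = Σ_i b i * (-d) ^ i`. -/
theorem negative_base_unique_representation (d : ℕ) (hd : 2 ≤ d) :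
    ∀ n : ℤ, ∃! b : ℕ →₀ ℤ,
      (∀ i : ℕ, 0 ≤ b i ∧ b i ≤ (d : ℤ) - 1) ∧
        n = b.sum fun i c => c * (-(d : ℤ)) ^ i := by
  intro n
  obtain ⟨p, hp, rfl⟩ := exists_negBase_digits (d := d) (by exact_mod_cast hd) n
  refine ⟨p.toFinsupp.coeff, ⟨hp, eval_ofFinsupp_ofCoeff p.toFinsupp.coeff _⟩, ?_⟩
  rintro b ⟨hb, hbp⟩
  have hpb : (⟨.ofCoeff b⟩ : ℤ[X]) = p :=
    negBase_digits_unique (by simpa using hb) hp (by rw [eval_ofFinsupp_ofCoeff, ← hbp])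
  rw [← hpb]
end

section
/- Let d ≥ 2 be a natural number. Then 0 is the only cyclic vertex of the ECSD G(−dn, −dn+1, …, −dn+d−1): if m is an integer, k ≥ 1, and b_0, …, b_{k−1} are integers with 0 ≤ b_j ≤ d − 1 satisfying m = (−d)^k·m + Σ_{j=0}^{k−1} b_j·(−d)^j, then m = 0. -/
/-!
Weight a vertex `n` by `|3 n - 1|`. An edge `n ↦ -d n + c` out of a nonzero vertex flips its sign
and never decreases its absolute value, strictly increasing it when `n < 0`; the offset `-1` makes
negative vertices heavier, so the weight strictly increases along every edge out of a nonzero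
vertex. A closed walk through a nonzero vertex would therefore end heavier than it started.
-/

namespace ECSD

variable {d c n m : ℤ} {b : ℕ → ℤ} {k : ℕ}

/-- The vertex reached from `m` by following the edges with digits `b (k - 1), …, b 1, b 0`. -/
def walkEnd (d : ℤ) (b : ℕ → ℤ) (m : ℤ) (k : ℕ) : ℤ :=
  (-d) ^ k * m + ∑ j ∈ Finset.range k, b j * (-d) ^ j

lemma walkEnd_zero : walkEnd d b m 0 = m := by
  simp [walkEnd]

lemma walkEnd_succ :
    walkEnd d b m (k + 1) = -d * walkEnd d (fun j ↦ b (j + 1)) m k + b 0 := by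
  have hterm (j : ℕ) : b (j + 1) * (-d) ^ (j + 1) = -d * (b (j + 1) * (-d) ^ j) := by ring
  simp only [walkEnd, Finset.sum_range_succ', hterm, ← Finset.mul_sum]
  ring

lemma abs_three_mul_sub_one_lt_step (hd : 2 ≤ d) (hc₀ : 0 ≤ c) (hc : c ≤ d - 1) (hn : n ≠ 0) :
    |3 * n - 1| < |3 * (-d * n + c) - 1| := by
  rcases hn.lt_or_gt with hneg | hpos
  · have hstep : -2 * n ≤ -d * n + c := by nlinarith
    rw [abs_of_neg (by omega), abs_of_pos (by omega)]
    omega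
  · have hstep : -d * n + c ≤ -n := by nlinarith
    rw [abs_of_pos (by omega), abs_of_neg (by omega)]
    omega

lemma one_le_abs_three_mul_sub_one (n : ℤ) : 1 ≤ |3 * n - 1| :=
  Int.one_le_abs (by omega)

lemma abs_three_mul_sub_one_le_step (hd : 2 ≤ d) (hc₀ : 0 ≤ c) (hc : c ≤ d - 1) (n : ℤ) :
    |3 * n - 1| ≤ |3 * (-d * n + c) - 1| := by
  rcases eq_or_ne n 0 with rfl | hn
  · simpa using one_le_abs_three_mul_sub_one c
  · exact (abs_three_mul_sub_one_lt_step hd hc₀ hc hn).le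

lemma two_le_abs_three_mul_sub_one (hn : n ≠ 0) : 2 ≤ |3 * n - 1| := by
  rcases hn.lt_or_gt with hneg | hpos
  · rw [abs_of_neg (by omega)]; omega
  · rw [abs_of_pos (by omega)]; omega

variable (hd : 2 ≤ d) (hb : ∀ j < k, 0 ≤ b j ∧ b j ≤ d - 1)
include hd hb

lemma abs_three_mul_sub_one_le_walkEnd : |3 * m - 1| ≤ |3 * walkEnd d b m k - 1| := by
  induction k generalizing b with
  | zero => rw [walkEnd_zero]
  | succ k ih =>
    have hb' : ∀ j < k, 0 ≤ b (j + 1) ∧ b (j + 1) ≤ d - 1 := fun j hj ↦ hb (j + 1) (by omega)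
    obtain ⟨hb₀, hb₀'⟩ := hb 0 (by omega)
    rw [walkEnd_succ]
    exact (ih hb').trans (abs_three_mul_sub_one_le_step hd hb₀ hb₀' _)

lemma abs_three_mul_sub_one_lt_walkEnd (hm : m ≠ 0) (hk : 1 ≤ k) :
    |3 * m - 1| < |3 * walkEnd d b m k - 1| := by
  cases k with
  | zero => omega
  | succ k =>
    have hb' : ∀ j < k, 0 ≤ b (j + 1) ∧ b (j + 1) ≤ d - 1 := fun j hj ↦ hb (j + 1) (by omega)
    obtain ⟨hb₀, hb₀'⟩ := hb 0 (by omega)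
    have hle := abs_three_mul_sub_one_le_walkEnd (m := m) hd hb'
    have hx : walkEnd d (fun j ↦ b (j + 1)) m k ≠ 0 := by
      intro hx
      rw [hx] at hle
      have := two_le_abs_three_mul_sub_one hm
      norm_num at hle
      omega
    rw [walkEnd_succ]
    exact hle.trans_lt (abs_three_mul_sub_one_lt_step hd hb₀ hb₀' hx)

end ECSD

/-- For a natural number `d ≥ 2`, zero is the only cyclic vertex of the ECSD
`G(-dn, -dn+1, …, -dn+d-1)`. -/
theorem ecsd_negative_base_zero_only_cyclic
    (d : ℕ) (hd : 2 ≤ d)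
    (m : ℤ) (k : ℕ) (hk : 1 ≤ k) (b : ℕ → ℤ)
    (hb : ∀ j < k, 0 ≤ b j ∧ b j ≤ (d : ℤ) - 1)
    (hcyc : m = (-(d : ℤ)) ^ k * m + ∑ j ∈ Finset.range k, b j * (-(d : ℤ)) ^ j) :
    m = 0 := by
  by_contra hm
  have hgrow := ECSD.abs_three_mul_sub_one_lt_walkEnd (by exact_mod_cast hd) hb hm hk
  rw [ECSD.walkEnd, ← hcyc] at hgrow
  exact hgrow.false
end
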